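/- Let n and r be integers with 1 ≤ r ≤ n − 2. Every finite simple graph G on n vertices with edge connectivity exactly r satisfies H(G) ≤ H(K(n−1,r)), with equality if and only if G is isomorphic to K(n−1,r). -/

import Mathlib

/-!
A pair of vertices at distance other than `1` contributes at most `1/2` to `H(G)`, so
`H(G) ≤ C(n,2) - ē/2` where `ē` is the number of non-edges, with equality when every non-edge
has a common neighbour. If deleting `r` edges separates `A` from `Aᶜ`, at most `r` of the
`|A| |Aᶜ| ≥ n - 1` pairs across the cut are edges, so `ē ≥ n - 1 - r`; `K(n-1,r)` has exactly
`n - 1 - r` non-edges, all at its extra vertex, and diameter `2`. Equality forces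
`|A| |Aᶜ| = n - 1`, so one side is a single vertex `x`; then every non-edge contains `x` and
`deg x = r`, which determines the graph up to isomorphism.
-/

open SimpleGraph

/-- The Harary index of a finite simple graph: sum of reciprocals of distances over
unordered pairs of distinct vertices (pairs at infinite distance contribute `0`,
since `SimpleGraph.dist` is `0` there and `1/0 = 0` in `ℝ`). -/
noncomputable def hararyIndex {V : Type*} [Fintype V] (G : SimpleGraph V) : ℝ :=
  (∑ u : V, ∑ v : V, (1 : ℝ) / (G.dist u v)) / 2

/-- The graph `K(n-1, r)` on `n` vertices: a complete graph `K_{n-1}` on the first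
`n - 1` vertices, together with one extra vertex (the last one) joined to exactly the
first `r` vertices of the `K_{n-1}`. -/
def Knr (n r : ℕ) : SimpleGraph (Fin n) :=
  SimpleGraph.fromRel (fun a b =>
    ((a : ℕ) < n - 1 ∧ (b : ℕ) < n - 1) ∨ ((a : ℕ) = n - 1 ∧ (b : ℕ) < r))

/-- The edge connectivity of `G`: the least number of edges whose deletion yields a
disconnected graph or a single vertex. -/
noncomputable def edgeConnectivity {V : Type*} [Fintype V] (G : SimpleGraph V) : ℕ :=
  sInf {k | ∃ E : Set (Sym2 V), E ⊆ G.edgeSet ∧ E.ncard = k ∧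
    (¬ (G.deleteEdges E).Connected ∨ Fintype.card V = 1)}

open Finset

theorem Fintype.exists_equiv_iff_of_card_eq {α β : Type*} [Fintype α] [Fintype β]
    {p : α → Prop} {q : β → Prop} [DecidablePred p] [DecidablePred q]
    (h : Fintype.card α = Fintype.card β)
    (hpq : Fintype.card {a // p a} = Fintype.card {b // q b}) :
    ∃ e : α ≃ β, ∀ a, q (e a) ↔ p a := by
  have hpq' : Fintype.card {a // ¬p a} = Fintype.card {b // ¬q b} := by
    rw [Fintype.card_subtype_compl, Fintype.card_subtype_compl, h, hpq]
  refine ⟨(Equiv.sumCompl p).symm.trans (((Fintype.equivOfCardEq hpq).sumCongr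
    (Fintype.equivOfCardEq hpq')).trans (Equiv.sumCompl q)), fun a => ?_⟩
  by_cases ha : p a
  · simpa [Equiv.sumCompl_symm_apply_of_pos ha, ha] using
      (Fintype.equivOfCardEq hpq ⟨a, ha⟩).2
  · simpa [Equiv.sumCompl_symm_apply_of_neg ha, ha] using
      (Fintype.equivOfCardEq hpq' ⟨a, ha⟩).2

namespace SimpleGraph

variable {V W : Type*} {G : SimpleGraph V} {G' : SimpleGraph W}

theorem Hom.edist_le (f : G →g G') (u v : V) : G'.edist (f u) (f v) ≤ G.edist u v :=
  le_iInf fun p => p.length_map f ▸ (p.map f).edist_le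

theorem Iso.dist_eq (φ : G ≃g G') (u v : V) : G'.dist (φ u) (φ v) = G.dist u v := by
  have h : G'.edist (φ u) (φ v) = G.edist u v := by
    refine le_antisymm (Hom.edist_le φ.toHom u v) ?_
    simpa using Hom.edist_le φ.symm.toHom (φ u) (φ v)
  rw [dist, dist, h]

theorem Iso.hararyIndex_eq [Fintype V] [Fintype W] (φ : G ≃g G') :
    hararyIndex G = hararyIndex G' := by
  unfold hararyIndex
  congr 1
  exact Fintype.sum_equiv φ.toEquiv _ _ fun u =>
    Fintype.sum_equiv φ.toEquiv _ _ fun v => by simp [φ.dist_eq]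

theorem one_div_dist_le_half_of_not_adj {u v : V} (h : ¬G.Adj u v) :
    (1 : ℝ) / G.dist u v ≤ 1 / 2 := by
  rcases Nat.eq_zero_or_pos (G.dist u v) with h0 | hpos
  · simp [h0]
  · have : G.dist u v ≠ 1 := dist_eq_one_iff_adj.not.mpr h
    gcongr
    exact_mod_cast (by omega : 2 ≤ G.dist u v)

theorem sum_sum_ite_adj [Fintype V] (H : SimpleGraph V) [DecidableRel H.Adj] :
    ∑ u, ∑ v, (if H.Adj u v then (1 : ℝ) else 0) = 2 * #H.edgeFinset := by
  simp_rw [Finset.sum_boole, ← neighborFinset_eq_filter]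
  exact_mod_cast H.sum_degrees_eq_twice_card_edges

theorem IsClique.adj_iff_ne {s : Set V} (h : G.IsClique s) {u v : V} (hu : u ∈ s) (hv : v ∈ s) :
    G.Adj u v ↔ u ≠ v :=
  ⟨Adj.ne, h hu hv⟩

theorem dist_eq_two_of_isClique_compl_singleton {x w u v : V} (hG : G.IsClique {x}ᶜ)
    (hw : G.Adj x w) (huv : Gᶜ.Adj u v) : G.dist u v = 2 := by
  have from_x : ∀ {v}, Gᶜ.Adj x v → G.dist x v = 2 := by
    intro v hv
    rw [compl_adj] at hv
    have hwv : G.Adj w v := hG (Set.mem_compl_singleton_iff.mpr hw.ne.symm)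
      (Set.mem_compl_singleton_iff.mpr hv.1.symm) fun h => hv.2 (h ▸ hw)
    rw [dist,
      edist_eq_two_iff.mpr ⟨hv.1, hv.2, w, (mem_commonNeighbors G).mpr ⟨hw, hwv.symm⟩⟩]
    rfl
  by_cases hu : u = x
  · exact hu ▸ from_x (hu ▸ huv)
  by_cases hv : v = x
  · rw [dist_comm]
    exact hv ▸ from_x (hv ▸ huv.symm)
  exact absurd (hG hu hv ((compl_adj G u v).mp huv).1) ((compl_adj G u v).mp huv).2

section Harary

variable [DecidableEq V] [DecidableRel G.Adj]

theorem one_div_dist_le (u v : V) :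
    (1 : ℝ) / G.dist u v ≤
      (if (⊤ : SimpleGraph V).Adj u v then 1 else 0) - (if Gᶜ.Adj u v then 1 else 0) / 2 := by
  rcases eq_or_ne u v with rfl | huv
  · simp
  by_cases hadj : G.Adj u v
  · simp [huv, hadj, dist_eq_one_iff_adj.mpr hadj]
  · have hc : Gᶜ.Adj u v := (compl_adj G u v).mpr ⟨huv, hadj⟩
    have := one_div_dist_le_half_of_not_adj hadj
    simp only [top_adj, huv, hc, if_true, ne_eq, not_false_eq_true]
    linarith

theorem one_div_dist_eq {u v : V} (h : Gᶜ.Adj u v → G.dist u v = 2) :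
    (1 : ℝ) / G.dist u v =
      (if (⊤ : SimpleGraph V).Adj u v then 1 else 0) - (if Gᶜ.Adj u v then 1 else 0) / 2 := by
  rcases eq_or_ne u v with rfl | huv
  · simp
  by_cases hadj : G.Adj u v
  · simp [huv, hadj, dist_eq_one_iff_adj.mpr hadj]
  · have hc : Gᶜ.Adj u v := (compl_adj G u v).mpr ⟨huv, hadj⟩
    norm_num [huv, hc, h hc]

variable [Fintype V]

theorem hararyIndex_le :
    hararyIndex G ≤ (Fintype.card V).choose 2 - (#Gᶜ.edgeFinset : ℝ) / 2 := by
  have h := Finset.sum_le_sum fun u (_ : u ∈ univ) =>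
    Finset.sum_le_sum fun v (_ : v ∈ univ) => one_div_dist_le (G := G) u v
  simp only [Finset.sum_sub_distrib, ← Finset.sum_div, sum_sum_ite_adj,
    card_edgeFinset_top_eq_card_choose_two] at h
  unfold hararyIndex
  linarith

theorem hararyIndex_eq_of_forall_compl_adj (h : ∀ u v, Gᶜ.Adj u v → G.dist u v = 2) :
    hararyIndex G = (Fintype.card V).choose 2 - (#Gᶜ.edgeFinset : ℝ) / 2 := by
  have h := Finset.sum_congr rfl fun u (_ : u ∈ univ) =>
    Finset.sum_congr rfl fun v (_ : v ∈ univ) => one_div_dist_eq (G := G) (h u v)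
  simp only [Finset.sum_sub_distrib, ← Finset.sum_div, sum_sum_ite_adj,
    card_edgeFinset_top_eq_card_choose_two] at h
  unfold hararyIndex
  linarith

theorem degree_eq_card_edgeFinset_iff {x : V} :
    G.degree x = #G.edgeFinset ↔ ∀ e ∈ G.edgeSet, x ∈ e := by
  rw [← card_incidenceFinset_eq_degree]
  constructor
  · intro h e he
    have he' : e ∈ G.incidenceFinset x :=
      eq_of_subset_of_card_le (G.incidenceFinset_subset x) h.ge ▸ G.mem_edgeFinset.mpr he
    rw [incidenceFinset_eq_filter] at he'
    exact (mem_filter.mp he').2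
  · intro h
    congr 1
    ext e
    simp only [incidenceFinset_eq_filter, mem_filter, mem_edgeFinset, and_iff_left_iff_imp]
    exact h e

theorem isClique_compl_singleton_iff {x : V} :
    G.IsClique {x}ᶜ ↔ Gᶜ.degree x = #Gᶜ.edgeFinset := by
  rw [degree_eq_card_edgeFinset_iff, isClique_iff, Set.Pairwise]
  constructor
  · rintro h ⟨u, v⟩ he
    rw [mem_edgeSet, compl_adj] at he
    by_contra hx
    simp only [Sym2.mem_iff, not_or] at hx
    exact he.2 (h (Ne.symm hx.1) (Ne.symm hx.2) he.1)
  · intro h u hu v hv huv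
    by_contra hadj
    rcases Sym2.mem_iff.mp (h s(u, v) ((compl_adj G u v).mpr ⟨huv, hadj⟩)) with rfl | rfl
    exacts [hu rfl, hv rfl]

end Harary

section Iso

variable [Fintype V] [Fintype W] [DecidableRel G.Adj] [DecidableRel G'.Adj]

theorem card_subtype_adj (x : V) : Fintype.card {v // G.Adj x v} = G.degree x := by
  simp [Fintype.card_subtype, degree, neighborFinset_eq_filter]

theorem nonempty_iso_of_isClique_compl_singleton {x : V} {x' : W} (hG : G.IsClique {x}ᶜ)
    (hG' : G'.IsClique {x'}ᶜ) (hcard : Fintype.card V = Fintype.card W)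
    (hdeg : G.degree x = G'.degree x') : Nonempty (G ≃g G') := by
  classical
  have hcard' : Fintype.card {v // v ≠ x} = Fintype.card {w // w ≠ x'} := by
    simp [Fintype.card_subtype_compl, hcard]
  have hdeg' : Fintype.card {v : {v // v ≠ x} // G.Adj x v} =
      Fintype.card {w : {w // w ≠ x'} // G'.Adj x' w} := by
    rw [Fintype.card_congr (Equiv.subtypeSubtypeEquivSubtype fun h => (G.ne_of_adj h).symm),
      Fintype.card_congr (Equiv.subtypeSubtypeEquivSubtype fun h => (G'.ne_of_adj h).symm),
      card_subtype_adj, card_subtype_adj, hdeg]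
  obtain ⟨e, he⟩ := Fintype.exists_equiv_iff_of_card_eq hcard' hdeg'
  let f : V ≃ W := (Equiv.optionSubtypeNe x).symm.trans
    (e.optionCongr.trans (Equiv.optionSubtypeNe x'))
  have hfx : f x = x' := by simp [f]
  have hf : ∀ v (hv : v ≠ x), f v = e ⟨v, hv⟩ := fun v hv => by
    simp [f, Equiv.optionSubtypeNe_symm_of_ne hv]
  refine ⟨⟨f, fun {u v} => ?_⟩⟩
  by_cases hu : u = x <;> by_cases hv : v = x
  · subst hu hv
    simp
  · subst hu
    rw [hfx, hf v hv, he]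
  · subst hv
    rw [hfx, hf u hu, G'.adj_comm, he, G.adj_comm]
  · rw [hf u hu, hf v hv, hG'.adj_iff_ne (e _).2 (e _).2, hG.adj_iff_ne hu hv, ne_eq, ne_eq,
      ← Subtype.ext_iff, e.apply_eq_iff_eq, Subtype.mk.injEq]

end Iso

section Cut

variable [Fintype V]

theorem exists_disconnecting_finset_of_edgeConnectivity_ne_zero (h : edgeConnectivity G ≠ 0) :
    ∃ E : Finset (Sym2 V), #E = edgeConnectivity G ∧
      (¬ (G.deleteEdges E).Connected ∨ Fintype.card V = 1) := by
  obtain ⟨E, -, hE, hdisc⟩ := Nat.sInf_mem (Nat.nonempty_of_pos_sInf (Nat.pos_of_ne_zero h))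
  refine ⟨E.toFinite.toFinset, ?_, by rwa [Set.Finite.coe_toFinset]⟩
  rw [← Set.ncard_eq_toFinset_card E, hE]
  rfl

theorem degree_le_card_of_forall_adj [DecidableRel G.Adj] {E : Finset (Sym2 V)} {x : V}
    (h : ∀ v, G.Adj x v → s(x, v) ∈ E) : G.degree x ≤ #E :=
  card_le_card_of_injOn (fun v => s(x, v)) (fun v hv => h v ((mem_neighborFinset _ _ _).mp hv))
    fun _ _ _ _ huv => Sym2.congr_right.mp huv

variable [DecidableEq V]

theorem exists_cut_of_not_connected_deleteEdges [Nonempty V] {E : Set (Sym2 V)}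
    (h : ¬(G.deleteEdges E).Connected) :
    ∃ A : Finset V, A.Nonempty ∧ Aᶜ.Nonempty ∧
      ∀ u ∈ A, ∀ v ∉ A, G.Adj u v → s(u, v) ∈ E := by
  classical
  obtain ⟨u₀, v₀, huv⟩ : ∃ u v, ¬(G.deleteEdges E).Reachable u v := by
    simpa [connected_iff, Preconnected] using h
  refine ⟨({v | (G.deleteEdges E).Reachable u₀ v} : Finset V), ⟨u₀, by simp⟩,
    ⟨v₀, by simpa using huv⟩, fun u hu v hv hadj => ?_⟩
  by_contra hE
  simp only [mem_filter, mem_univ, true_and] at hu hv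
  exact hv (hu.trans (deleteEdges_adj.mpr ⟨hadj, hE⟩).reachable)

theorem exists_cut_of_edgeConnectivity (h : edgeConnectivity G ≠ 0) (hV : 1 < Fintype.card V) :
    ∃ A : Finset V, ∃ E : Finset (Sym2 V), A.Nonempty ∧ Aᶜ.Nonempty ∧
      #E = edgeConnectivity G ∧ ∀ u ∈ A, ∀ v ∉ A, G.Adj u v → s(u, v) ∈ E := by
  obtain ⟨E, hE, hdisc | hV1⟩ := exists_disconnecting_finset_of_edgeConnectivity_ne_zero h
  · have : Nonempty V := Fintype.card_pos_iff.mp (by omega)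
    obtain ⟨A, hA, hAc, hcut⟩ := exists_cut_of_not_connected_deleteEdges hdisc
    exact ⟨A, E, hA, hAc, hE, hcut⟩
  · omega

variable [DecidableRel G.Adj] {E : Finset (Sym2 V)}

theorem card_mul_card_compl_le {A : Finset V}
    (hcut : ∀ u ∈ A, ∀ v ∉ A, G.Adj u v → s(u, v) ∈ E) :
    #A * #Aᶜ ≤ #E + #Gᶜ.edgeFinset := by
  calc #A * #Aᶜ = #(A ×ˢ Aᶜ) := (card_product _ _).symm
    _ ≤ #(E ∪ Gᶜ.edgeFinset) := by
      refine card_le_card_of_injOn (fun p => s(p.1, p.2)) (fun p hp => ?_) ?_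
      · simp only [coe_product, Set.mem_prod, mem_coe, mem_compl] at hp
        by_cases hadj : G.Adj p.1 p.2
        · exact mem_union_left _ (hcut _ hp.1 _ hp.2 hadj)
        · refine mem_union_right _ (mem_edgeFinset.mpr ((compl_adj G _ _).mpr ⟨?_, hadj⟩))
          rintro h
          exact hp.2 (h ▸ hp.1)
      · rintro ⟨a, b⟩ hab ⟨c, d⟩ hcd h
        simp only [coe_product, Set.mem_prod, mem_coe, mem_compl] at hab hcd
        rcases Sym2.eq_iff.mp h with ⟨rfl, rfl⟩ | ⟨rfl, rfl⟩
        · rfl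
        · exact absurd hab.1 hcd.2
    _ ≤ #E + #Gᶜ.edgeFinset := card_union_le _ _

variable {A : Finset V} (hA : A.Nonempty) (hAc : Aᶜ.Nonempty)
  (hcut : ∀ u ∈ A, ∀ v ∉ A, G.Adj u v → s(u, v) ∈ E)
include hA hAc hcut

theorem card_sub_one_le_of_cut : Fintype.card V - 1 ≤ #E + #Gᶜ.edgeFinset := by
  have := card_mul_card_compl_le hcut
  have := card_add_card_compl A
  have : #A + #Aᶜ ≤ #A * #Aᶜ + 1 := by nlinarith [hA.card_pos, hAc.card_pos]
  omega

theorem exists_isClique_compl_singleton_of_cut (h : #E + #Gᶜ.edgeFinset ≤ Fintype.card V - 1) :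
    ∃ x, G.IsClique {x}ᶜ ∧ G.degree x = #E := by
  obtain ⟨x, hxE⟩ : ∃ x, ∀ v, G.Adj x v → s(x, v) ∈ E := by
    have hone : #A = 1 ∨ #Aᶜ = 1 := by
      have hmul := card_mul_card_compl_le hcut
      have hsum := card_add_card_compl A
      by_contra! h'
      have : #A + #Aᶜ ≤ #A * #Aᶜ := by
        nlinarith [Nat.lt_of_le_of_ne hA.card_pos (Ne.symm h'.1),
          Nat.lt_of_le_of_ne hAc.card_pos (Ne.symm h'.2)]
      have := hA.card_pos
      omega
    rcases hone with h1 | h1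
    · obtain ⟨x, rfl⟩ := card_eq_one.mp h1
      exact ⟨x, fun v hv => hcut x (mem_singleton_self x) v (by simpa using hv.ne.symm) hv⟩
    · obtain ⟨x, hx⟩ := card_eq_one.mp h1
      refine ⟨x, fun v hv => Sym2.eq_swap ▸ hcut v ?_ x ?_ hv.symm⟩
      · by_contra hvA
        exact hv.ne (mem_singleton.mp (hx ▸ mem_compl.mpr hvA)).symm
      · simp [← mem_compl, hx]
  have := degree_le_card_of_forall_adj hxE
  have := Gᶜ.degree_le_card_edgeFinset x
  have := G.degree_compl (v := x)
  have := G.degree_lt_card_verts x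
  exact ⟨x, isClique_compl_singleton_iff.mpr (by omega), by omega⟩

end Cut

end SimpleGraph

namespace Knr

open SimpleGraph

variable {m r : ℕ}

theorem isClique_compl_last : (Knr (m + 1) r).IsClique {Fin.last m}ᶜ := by
  intro a ha b hb hab
  simp only [Set.mem_compl_iff, Set.mem_singleton_iff, ← Fin.val_ne_iff, Fin.val_last] at ha hb
  simp only [Knr, fromRel_adj, ne_eq, hab, not_false_eq_true, add_tsub_cancel_right, true_and]
  omega

theorem adj_last_iff (hr : r ≤ m) (b : Fin (m + 1)) :
    (Knr (m + 1) r).Adj (Fin.last m) b ↔ (b : ℕ) < r := by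
  simp only [Knr, fromRel_adj, ne_eq, ← Fin.val_ne_iff, Fin.val_last, add_tsub_cancel_right,
    true_and]
  omega

variable [DecidableRel (Knr (m + 1) r).Adj]

theorem degree_last (hr : r ≤ m) : (Knr (m + 1) r).degree (Fin.last m) = r := by
  have : (Knr (m + 1) r).neighborFinset (Fin.last m) = Iio ⟨r, by omega⟩ := by
    ext b
    simp [adj_last_iff hr, Fin.lt_def]
  rw [degree, this, Fin.card_Iio]

theorem card_compl_edgeFinset (hr : r ≤ m) : #(Knr (m + 1) r)ᶜ.edgeFinset = m - r := by
  rw [← isClique_compl_singleton_iff.mp isClique_compl_last, degree_compl, degree_last hr]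
  simp

theorem hararyIndex_eq (hr : 1 ≤ r) (hrm : r ≤ m) :
    hararyIndex (Knr (m + 1) r) = (m + 1).choose 2 - ((m - r : ℕ) : ℝ) / 2 := by
  have hadj : (Knr (m + 1) r).Adj (Fin.last m) 0 := (adj_last_iff hrm 0).mpr (by simpa)
  rw [hararyIndex_eq_of_forall_compl_adj fun u v =>
      dist_eq_two_of_isClique_compl_singleton isClique_compl_last hadj,
    card_compl_edgeFinset hrm, Fintype.card_fin]

end Knr

/-- For `1 ≤ r ≤ n − 2`, `K(n−1, r)` is the unique maximizer of the Harary index among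
graphs of order `n` with edge connectivity `r`. -/
theorem harary_le_Knr_of_edgeConnectivity (n r : ℕ) (hr : 1 ≤ r) (hrn : r + 2 ≤ n)
    {V : Type*} [Fintype V] (G : SimpleGraph V) (hcard : Fintype.card V = n)
    (hconn : edgeConnectivity G = r) :
    hararyIndex G ≤ hararyIndex (Knr n r) ∧
      (hararyIndex G = hararyIndex (Knr n r) ↔ Nonempty (G ≃g Knr n r)) := by
  classical
  obtain ⟨m, rfl⟩ : ∃ m, n = m + 1 := ⟨n - 1, by omega⟩
  obtain ⟨A, E, hA, hAc, hE, hcut⟩ :=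
    exists_cut_of_edgeConnectivity (G := G) (by omega) (by omega)
  have hK := Knr.hararyIndex_eq hr (by omega : r ≤ m)
  have hG := hcard ▸ hararyIndex_le (G := G)
  have hcompl : m - r ≤ #Gᶜ.edgeFinset := by
    have := hcard ▸ card_sub_one_le_of_cut hA hAc hcut
    omega
  have hle : hararyIndex G ≤ hararyIndex (Knr (m + 1) r) := by
    have : ((m - r : ℕ) : ℝ) ≤ #Gᶜ.edgeFinset := by exact_mod_cast hcompl
    linarith
  refine ⟨hle, fun heq => ?_, fun ⟨φ⟩ => φ.hararyIndex_eq⟩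
  have hcompl' : #Gᶜ.edgeFinset ≤ m - r := by
    have : (#Gᶜ.edgeFinset : ℝ) ≤ (m - r : ℕ) := by linarith
    exact_mod_cast this
  obtain ⟨x, hx, hdeg⟩ := exists_isClique_compl_singleton_of_cut hA hAc hcut (by omega)
  exact nonempty_iso_of_isClique_compl_singleton hx Knr.isClique_compl_last (by simp [hcard])
    (by rw [hdeg, hE, hconn, Knr.degree_last (by omega)])
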